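/- arXiv:2407.11376 — 11 statements merged into one kernel-verified Lean document; each statement's English description precedes it below -/
import Mathlib

section
/- Let p₁, p₂ ∈ (0,1]. The row vector π = ((1−p₁p₂)/(1+p₁), p₁/(1+p₁), p₁p₂/(1+p₁)) is a stationary distribution of P_BKP, i.e. all entries of π are nonnegative, the entries of π sum to 1, and π·P_BKP = π (row-vector times matrix). Moreover π is the unique such vector: any row vector π' with nonnegative entries summing to 1 satisfying π'·P_BKP = π' equals π. In particular the equilibrium probability of the success state 2 is p₁p₂/(1+p₁). -/
open Matrix

/-- For `p₁, p₂ ∈ (0,1]`, the row vector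
`π = ((1−p₁p₂)/(1+p₁), p₁/(1+p₁), p₁p₂/(1+p₁))` is the unique stationary
distribution of the Barrett–Kok (double-heralded) transition matrix, and in
particular the equilibrium probability of the success state `2` is `p₁p₂/(1+p₁)`. -/
theorem bkp_stationary_distribution (p₁ p₂ : ℝ)
    (h₁ : 0 < p₁) (h₁' : p₁ ≤ 1) (h₂ : 0 < p₂) (h₂' : p₂ ≤ 1) :
    let P : Matrix (Fin 3) (Fin 3) ℝ :=
      !![1 - p₁, p₁, 0; 1 - p₂, 0, p₂; 1 - p₁, p₁, 0]
    let π : Fin 3 → ℝ :=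
      ![(1 - p₁ * p₂) / (1 + p₁), p₁ / (1 + p₁), p₁ * p₂ / (1 + p₁)]
    (∀ s, 0 ≤ π s) ∧ (∑ s, π s = 1) ∧ π ᵥ* P = π ∧
      (∀ π' : Fin 3 → ℝ, (∀ s, 0 ≤ π' s) → (∑ s, π' s = 1) → π' ᵥ* P = π' → π' = π) ∧
      π 2 = p₁ * p₂ / (1 + p₁) := by
  intro P π
  have hp : (0:ℝ) < 1 + p₁ := by linarith
  have hp' : (1:ℝ) + p₁ ≠ 0 := ne_of_gt hp
  refine ⟨?_, ?_, ?_, ?_, rfl⟩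
  · intro s
    fin_cases s <;> simp [π]
    · apply div_nonneg _ (le_of_lt hp)
      nlinarith
    · positivity
    · positivity
  · simp [π, Fin.sum_univ_three]
    field_simp
    ring
  · funext i
    fin_cases i <;>
      simp [P, π, Matrix.vecMul, dotProduct, Fin.sum_univ_three] <;>
      field_simp <;> ring
  · intro π' _ hsum heq
    have h0 := congrFun heq 0
    have h1 := congrFun heq 1
    have h2 := congrFun heq 2
    simp [P, Matrix.vecMul, dotProduct, Fin.sum_univ_three] at h0 h1 h2
    rw [Fin.sum_univ_three] at hsum
    funext i
    have k1 : π' 1 * (1 + p₁) = p₁ := by linear_combination p₁ * hsum - h1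
    have k2 : π' 2 * (1 + p₁) = p₁ * p₂ := by
      linear_combination p₂ * k1 - (1 + p₁) * h2
    have k0 : π' 0 * (1 + p₁) = 1 - p₁ * p₂ := by
      linear_combination (1 + p₁) * hsum - k1 - k2
    fin_cases i <;> simp [π] <;> field_simp <;> linarith [k0, k1, k2]
end

section
/- Let p₁, p₂ ∈ [0,1] with p₁ > 0, and let k ≥ 1 be an integer. Then the first row of the k-th power of P_BKP satisfies: (P_BKP^k)₀₁ = p₁(1−(−p₁)^k)/(1+p₁) and (P_BKP^k)₀₂ = p₁p₂(1−(−p₁)^(k−1))/(1+p₁). -/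
/-!
The rows of `P_BKP` sum to `1`, hence so do the rows of its powers. Since column 1 of `P_BKP`
is `(p₁, 0, p₁)` and column 2 is `(0, p₂, 0)`, the entries `x k = (P^k)₀₁` and `(P^k)₀₂` obey
`x (k + 1) = p₁ (1 - x k)` and `(P^(k+1))₀₂ = p₂ x k`, and the first recurrence, started at
`x 0 = 0`, solves to `(1 + p₁) x k = p₁ (1 - (-p₁)^k)`.
-/

open Matrix

theorem Matrix.pow_mulVec_one_of_mulVec_one {n R : Type*} [Fintype n] [DecidableEq n]
    [Semiring R] {M : Matrix n n R} (hM : M *ᵥ 1 = 1) (k : ℕ) : (M ^ k) *ᵥ 1 = 1 := by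
  induction k with
  | zero => simp
  | succ k ih => rw [pow_succ, ← mulVec_mulVec, hM, ih]

theorem one_add_mul_eq_of_succ_eq_mul_one_sub {R : Type*} [CommRing R] {a : R} {x : ℕ → R}
    (h0 : x 0 = 0) (hsucc : ∀ k, x (k + 1) = a * (1 - x k)) (k : ℕ) :
    (1 + a) * x k = a * (1 - (-a) ^ k) := by
  induction k with
  | zero => simp [h0]
  | succ k ih => rw [hsucc, pow_succ]; linear_combination (-a) * ih

abbrev bkpMatrix (p₁ p₂ : ℝ) : Matrix (Fin 3) (Fin 3) ℝ :=
  !![1 - p₁, p₁, 0; 1 - p₂, 0, p₂; 1 - p₁, p₁, 0]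

theorem bkpMatrix_mulVec_one (p₁ p₂ : ℝ) : bkpMatrix p₁ p₂ *ᵥ 1 = 1 := by
  ext i; fin_cases i <;> simp [mulVec, dotProduct, Fin.sum_univ_three]

theorem bkpMatrix_pow_succ_zero_one (p₁ p₂ : ℝ) (k : ℕ) :
    (bkpMatrix p₁ p₂ ^ (k + 1)) 0 1 = p₁ * (1 - (bkpMatrix p₁ p₂ ^ k) 0 1) := by
  have hrow := congrFun (pow_mulVec_one_of_mulVec_one (bkpMatrix_mulVec_one p₁ p₂) k) 0
  simp only [mulVec, dotProduct, Pi.one_apply, mul_one, Fin.sum_univ_three] at hrow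
  rw [pow_succ, mul_apply, Fin.sum_univ_three]
  simp only [of_apply, cons_val', cons_val_one, cons_val_zero, cons_val_fin_one, mul_zero,
    add_zero, cons_val]
  linear_combination p₁ * hrow

theorem bkpMatrix_pow_succ_zero_two (p₁ p₂ : ℝ) (k : ℕ) :
    (bkpMatrix p₁ p₂ ^ (k + 1)) 0 2 = p₂ * (bkpMatrix p₁ p₂ ^ k) 0 1 := by
  rw [pow_succ, mul_apply, Fin.sum_univ_three]
  simp only [of_apply, cons_val', cons_val, cons_val_fin_one, cons_val_zero, mul_zero,
    cons_val_one, zero_add, add_zero]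
  ring

theorem bkp_pow_first_row_general (p₁ p₂ : ℝ)
    (h₁ : 0 < p₁)
    (k : ℕ) (hk : 1 ≤ k) :
    let P : Matrix (Fin 3) (Fin 3) ℝ :=
      !![1 - p₁, p₁, 0; 1 - p₂, 0, p₂; 1 - p₁, p₁, 0]
    (P ^ k) 0 1 = p₁ * (1 - (-p₁) ^ k) / (1 + p₁) ∧
    (P ^ k) 0 2 = p₁ * p₂ * (1 - (-p₁) ^ (k - 1)) / (1 + p₁) := by
  intro P
  have hne : 1 + p₁ ≠ 0 := by positivity
  have hx : ∀ m, (1 + p₁) * (P ^ m) 0 1 = p₁ * (1 - (-p₁) ^ m) :=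
    one_add_mul_eq_of_succ_eq_mul_one_sub (by simp) (bkpMatrix_pow_succ_zero_one p₁ p₂)
  obtain ⟨m, rfl⟩ := Nat.exists_eq_add_of_le' hk
  refine ⟨?_, ?_⟩
  · rw [eq_div_iff hne, mul_comm, hx]
  · rw [Nat.add_sub_cancel, eq_div_iff hne, bkpMatrix_pow_succ_zero_two]
    linear_combination p₂ * hx m

/-- Closed form for the first row of powers of the Barrett–Kok transition matrix:
for `p₁ ∈ (0,1]`, `p₂ ∈ [0,1]`, and `k ≥ 1`,
`(P_BKP^k)₀₁ = p₁(1−(−p₁)^k)/(1+p₁)` and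
`(P_BKP^k)₀₂ = p₁p₂(1−(−p₁)^(k−1))/(1+p₁)`. -/
theorem bkp_pow_first_row (p₁ p₂ : ℝ)
    (h₁ : 0 < p₁) (h₁' : p₁ ≤ 1) (h₂ : 0 ≤ p₂) (h₂' : p₂ ≤ 1)
    (k : ℕ) (hk : 1 ≤ k) :
    let P : Matrix (Fin 3) (Fin 3) ℝ :=
      !![1 - p₁, p₁, 0; 1 - p₂, 0, p₂; 1 - p₁, p₁, 0]
    (P ^ k) 0 1 = p₁ * (1 - (-p₁) ^ k) / (1 + p₁) ∧
    (P ^ k) 0 2 = p₁ * p₂ * (1 - (-p₁) ^ (k - 1)) / (1 + p₁) :=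
  bkp_pow_first_row_general p₁ p₂ h₁ k hk
end

section
/- Let p₁, p₂ ∈ (0,1]. Then the matrix I − Q_BKP is invertible, and the vector t = (I − Q_BKP)⁻¹·𝟏 (where 𝟏 = (1,1)ᵀ) satisfies t₀ = (1+p₁)/(p₁p₂) and t₁ = (1+p₁−p₂)/(p₁p₂). (t₀ is the mean latency, in units of the step duration τ, of double-heralded entanglement generation started from the failure state: the mean hitting time of the success state.) -/
open Matrix

/-- Mean latency of double-heralded entanglement generation via the fundamental
matrix: for `p₁, p₂ ∈ (0,1]`, the matrix `I − Q_BKP` is invertible and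
`t = (I − Q_BKP)⁻¹·𝟏` satisfies `t₀ = (1+p₁)/(p₁p₂)` and `t₁ = (1+p₁−p₂)/(p₁p₂)`. -/
theorem bkp_mean_latency (p₁ p₂ : ℝ)
    (h₁ : 0 < p₁) (h₁' : p₁ ≤ 1) (h₂ : 0 < p₂) (h₂' : p₂ ≤ 1) :
    let Q : Matrix (Fin 2) (Fin 2) ℝ := !![1 - p₁, p₁; 1 - p₂, 0]
    let t : Fin 2 → ℝ := (1 - Q)⁻¹ *ᵥ ![1, 1]
    IsUnit (1 - Q) ∧ t 0 = (1 + p₁) / (p₁ * p₂) ∧ t 1 = (1 + p₁ - p₂) / (p₁ * p₂) := by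
  intro Q t
  have hQ : (1 : Matrix (Fin 2) (Fin 2) ℝ) - Q = !![p₁, -p₁; p₂ - 1, 1] := by
    show (1 : Matrix (Fin 2) (Fin 2) ℝ) - !![1 - p₁, p₁; 1 - p₂, 0] = _
    rw [Matrix.one_fin_two]
    ext i j
    fin_cases i <;> fin_cases j <;> simp
  have hdet : ((1 : Matrix (Fin 2) (Fin 2) ℝ) - Q).det = p₁ * p₂ := by
    rw [hQ, Matrix.det_fin_two_of]; ring
  have hne : p₁ * p₂ ≠ 0 := by positivity
  have hu : IsUnit ((1 : Matrix (Fin 2) (Fin 2) ℝ) - Q) := by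
    rw [Matrix.isUnit_iff_isUnit_det, hdet, isUnit_iff_ne_zero]; exact hne
  refine ⟨hu, ?_, ?_⟩ <;>
  · show (((1 : Matrix (Fin 2) (Fin 2) ℝ) - Q)⁻¹ *ᵥ ![1, 1]) _ = _
    rw [Matrix.inv_def, hdet, hQ, Matrix.adjugate_fin_two_of]
    simp [Matrix.mulVec, dotProduct, Fin.sum_univ_two, Ring.inverse_eq_inv]
    rw [eq_div_iff hne]
    have h1 : p₁ ≠ 0 := h₁.ne'
    have h2 : p₂ ≠ 0 := h₂.ne'
    have e1 : p₁ * p₁⁻¹ = 1 := mul_inv_cancel₀ h1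
    have e2 : p₂ * p₂⁻¹ = 1 := mul_inv_cancel₀ h2
    have e3 : p₁ ^ 2 * p₁⁻¹ = p₁ := by rw [sq, mul_assoc, e1, mul_one]
    have e4 : p₂ ^ 2 * p₂⁻¹ = p₂ := by rw [sq, mul_assoc, e2, mul_one]
    ring_nf
    simp only [mul_assoc, mul_comm, mul_left_comm, e1, e2, e3, e4] <;> ring_nf <;>
      field_simp <;> ring
end

section
/- Let p₁, p₂ ∈ (0,1]. Let N = (I − Q_BKP)⁻¹, t = N·𝟏, and v = (2N − I)·t − t ⊙ t, where ⊙ denotes entrywise (Hadamard) product. Then v₀ = ((1+p₁)/(p₁p₂))² − (3+p₁)/(p₁p₂). (v₀ is the variance of the latency, in units of τ², of double-heralded entanglement generation started from the failure state.) -/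
open Matrix

/-- Latency variance of double-heralded entanglement generation via the fundamental
matrix: for `p₁, p₂ ∈ (0,1]`, with `N = (I − Q_BKP)⁻¹`, `t = N·𝟏`, and
`v = (2N − I)·t − t ⊙ t` (Hadamard product), one has
`v₀ = ((1+p₁)/(p₁p₂))² − (3+p₁)/(p₁p₂)`. -/
theorem bkp_latency_variance (p₁ p₂ : ℝ)
    (h₁ : 0 < p₁) (h₁' : p₁ ≤ 1) (h₂ : 0 < p₂) (h₂' : p₂ ≤ 1) :
    let Q : Matrix (Fin 2) (Fin 2) ℝ := !![1 - p₁, p₁; 1 - p₂, 0]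
    let N : Matrix (Fin 2) (Fin 2) ℝ := (1 - Q)⁻¹
    let t : Fin 2 → ℝ := N *ᵥ ![1, 1]
    let v : Fin 2 → ℝ := (2 • N - 1) *ᵥ t - t * t
    v 0 = ((1 + p₁) / (p₁ * p₂)) ^ 2 - (3 + p₁) / (p₁ * p₂) := by
  intro Q N t v
  have hd : p₁ * p₂ ≠ 0 := by positivity
  have hN : N = (p₁ * p₂)⁻¹ • !![1, p₁; 1 - p₂, p₁] := by
    apply Matrix.inv_eq_right_inv
    ext i j
    fin_cases i <;> fin_cases j <;>
      simp [Q, Matrix.mul_apply, Matrix.one_apply, Fin.sum_univ_two, Matrix.one_fin_two] <;>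
      field_simp <;> ring
  simp only [v, t, hN, Matrix.mulVec, dotProduct, Fin.sum_univ_two,
    Matrix.sub_apply, Matrix.smul_apply, Matrix.one_apply, Pi.sub_apply, Pi.mul_apply,
    Matrix.cons_val', Matrix.cons_val_zero, Matrix.cons_val_one, Matrix.head_cons,
    Matrix.empty_val', Matrix.cons_val_fin_one, smul_eq_mul]
  norm_num
  field_simp
  ring
end

section
/- Let n ≥ 1 and p₁,…,pₙ ∈ (0,1]. Set D = 1 + ∑_{i=1}^{n−1} ∏_{j=1}^{i} p_j. The row vector π indexed by {0,1,…,n} with π₀ = (1 − ∏_{i=1}^{n} p_i)/D and π_i = (∏_{j=1}^{i} p_j)/D for 1 ≤ i ≤ n is a stationary distribution of Pₙ: all entries are nonnegative, they sum to 1, and π·Pₙ = π. Moreover it is the unique such vector. In particular the equilibrium probability of the overall-success state n is π_n = (∏_{i=1}^{n} p_i)/(1 + ∑_{i=1}^{n−1} ∏_{j=1}^{i} p_j). -/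
open Matrix

/-!
Stationarity at a state `t + 1` reads `π (t + 1) = π t * p (t + 1)` for `t ≥ 1` and
`π 1 = (π 0 + π n) * p 1`; the equation at the failure state `0` is redundant because
the rows of `Pₙ` sum to one, so that `v ↦ v Pₙ` preserves total mass. Hence every fixed
vector is `c • w` with `c = v 0 + v n` and `w = (1 - p₁⋯pₙ, p₁, p₁p₂, …, p₁⋯pₙ)`, whose
total mass is `D`; normalising forces `c = D⁻¹`.
-/

/-- Transition matrix of the `n`-round multiheralded entanglement generation Markov
chain on states `{0,1,…,n}` (state `0` is failure, state `i ≥ 1` means round `i`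
succeeded, state `n` is overall success); `p i` is the success probability of
round `i` for `1 ≤ i ≤ n`. -/
def multiHeraldedP (n : ℕ) (p : ℕ → ℝ) : Matrix (Fin (n + 1)) (Fin (n + 1)) ℝ :=
  fun i j =>
    if (i : ℕ) < n then
      if (j : ℕ) = 0 then 1 - p ((i : ℕ) + 1)
      else if (j : ℕ) = (i : ℕ) + 1 then p ((i : ℕ) + 1)
      else 0
    else
      if (j : ℕ) = 0 then 1 - p 1
      else if (j : ℕ) = 1 then p 1
      else 0

namespace MultiHerald

variable {m : ℕ} (p : ℕ → ℝ)

@[simp]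
lemma multiHeraldedP_castSucc_zero (s : Fin (m + 1)) :
    multiHeraldedP (m + 1) p s.castSucc 0 = 1 - p (s + 1) := by
  simp [multiHeraldedP, s.is_lt]

@[simp]
lemma multiHeraldedP_castSucc_succ (s t : Fin (m + 1)) :
    multiHeraldedP (m + 1) p s.castSucc t.succ = if t = s then p (s + 1) else 0 := by
  rw [multiHeraldedP]
  simp [s.is_lt, Fin.val_inj]

@[simp]
lemma multiHeraldedP_last_zero : multiHeraldedP (m + 1) p (Fin.last _) 0 = 1 - p 1 := by
  simp [multiHeraldedP]

@[simp]
lemma multiHeraldedP_last_succ (t : Fin (m + 1)) :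
    multiHeraldedP (m + 1) p (Fin.last _) t.succ = if t = 0 then p 1 else 0 := by
  rw [multiHeraldedP]
  simp [← Fin.val_eq_zero_iff]

lemma multiHeraldedP_mulVec_one : multiHeraldedP (m + 1) p *ᵥ 1 = 1 := by
  ext i
  induction i using Fin.lastCases <;>
    simp [mulVec, dotProduct, Fin.sum_univ_succ]

lemma sum_vecMul_multiHeraldedP (v : Fin (m + 2) → ℝ) :
    ∑ j, (v ᵥ* multiHeraldedP (m + 1) p) j = ∑ i, v i := by
  rw [← dotProduct_one, ← dotProduct_mulVec, multiHeraldedP_mulVec_one, dotProduct_one]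

lemma vecMul_multiHeraldedP_succ (v : Fin (m + 2) → ℝ) (t : Fin (m + 1)) :
    (v ᵥ* multiHeraldedP (m + 1) p) t.succ
      = v t.castSucc * p (t + 1) + if t = 0 then v (Fin.last _) * p 1 else 0 := by
  simp [vecMul, dotProduct, Fin.sum_univ_castSucc]

lemma vecMul_multiHeraldedP_eq_self_iff (v : Fin (m + 2) → ℝ) :
    v ᵥ* multiHeraldedP (m + 1) p = v ↔ ∀ t : Fin (m + 1),
      v t.succ = v t.castSucc * p (t + 1) + if t = 0 then v (Fin.last _) * p 1 else 0 := by
  simp only [← vecMul_multiHeraldedP_succ]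
  refine ⟨fun h t => by rw [h], fun h => ?_⟩
  have hmass := (Fin.sum_univ_succ _).symm.trans
    ((sum_vecMul_multiHeraldedP p v).trans (Fin.sum_univ_succ v))
  simp only [← h] at hmass
  funext j
  induction j using Fin.cases with
  | zero => exact add_right_cancel hmass
  | succ t => exact (h t).symm

def successProb (i : ℕ) : ℝ := ∏ j ∈ Finset.Icc 1 i, p j

lemma successProb_zero : successProb p 0 = 1 := by simp [successProb]

lemma successProb_succ (i : ℕ) : successProb p (i + 1) = successProb p i * p (i + 1) :=
  Finset.prod_Icc_succ_top (by omega) p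

lemma successProb_one : successProb p 1 = p 1 := by
  simp [successProb_succ, successProb_zero]

lemma successProb_nonneg {i n : ℕ} (hp : ∀ j ∈ Finset.Icc 1 n, 0 ≤ p j) (hi : i ≤ n) :
    0 ≤ successProb p i :=
  Finset.prod_nonneg fun j hj => hp j (Finset.Icc_subset_Icc_right hi hj)

lemma successProb_le_one {n : ℕ} (hp : ∀ i ∈ Finset.Icc 1 n, 0 ≤ p i ∧ p i ≤ 1) :
    successProb p n ≤ 1 :=
  Finset.prod_le_one (fun i hi => (hp i hi).1) fun i hi => (hp i hi).2

/-- The paper's stationary vector times its normaliser `D`. -/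
def stationaryWeight (n : ℕ) : Fin (n + 1) → ℝ :=
  fun i => if (i : ℕ) = 0 then 1 - successProb p n else successProb p i

@[simp]
lemma stationaryWeight_zero {n : ℕ} : stationaryWeight p n 0 = 1 - successProb p n := by
  simp [stationaryWeight]

@[simp]
lemma stationaryWeight_succ {n : ℕ} (t : Fin n) :
    stationaryWeight p n t.succ = successProb p (t + 1) := by
  simp [stationaryWeight]

lemma stationaryWeight_vecMul : stationaryWeight p (m + 1) ᵥ* multiHeraldedP (m + 1) p
    = stationaryWeight p (m + 1) := by
  rw [vecMul_multiHeraldedP_eq_self_iff]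
  intro t
  induction t using Fin.cases with
  | zero =>
    rw [if_pos rfl, Fin.castSucc_zero, ← Fin.succ_last]
    simp only [stationaryWeight_zero, stationaryWeight_succ, Fin.val_zero, Fin.val_last,
      zero_add, successProb_one]
    ring
  | succ s =>
    rw [if_neg (Fin.succ_ne_zero s), ← Fin.succ_castSucc]
    simp only [stationaryWeight_succ, Fin.val_succ, Fin.val_castSucc, successProb_succ, add_zero]

lemma eq_smul_stationaryWeight_of_vecMul_eq_self {v : Fin (m + 2) → ℝ}
    (hv : v ᵥ* multiHeraldedP (m + 1) p = v) :
    v = (v 0 + v (Fin.last _)) • stationaryWeight p (m + 1) := by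
  rw [vecMul_multiHeraldedP_eq_self_iff] at hv
  set c := v 0 + v (Fin.last _)
  have hsucc : ∀ t : Fin (m + 1), v t.succ = c * successProb p (t + 1) := by
    intro t
    induction t using Fin.induction with
    | zero =>
      rw [hv, if_pos rfl, Fin.castSucc_zero, Fin.val_zero, zero_add, successProb_one, add_mul]
    | succ t ih =>
      rw [hv, if_neg (Fin.succ_ne_zero t), ← Fin.succ_castSucc, ih, add_zero, Fin.val_castSucc,
        Fin.val_succ, successProb_succ p (t + 1), mul_assoc]
  have hlast : v (Fin.last _) = c * successProb p (m + 1) := by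
    rw [← Fin.succ_last, hsucc, Fin.val_last]
  funext i
  induction i using Fin.cases with
  | zero =>
    rw [Pi.smul_apply, stationaryWeight_zero, smul_eq_mul]
    linarith
  | succ t => rw [Pi.smul_apply, stationaryWeight_succ, hsucc, smul_eq_mul]

lemma sum_stationaryWeight :
    ∑ i, stationaryWeight p (m + 1) i = 1 + ∑ i ∈ Finset.Icc 1 m, successProb p i := by
  have hIcc : ∑ i ∈ Finset.Icc 1 m, successProb p i = ∑ s : Fin m, successProb p (s + 1) := by
    rw [Fin.sum_univ_eq_sum_range (fun i => successProb p (i + 1)), Finset.range_eq_Ico,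
      Finset.sum_Ico_add', zero_add, Finset.Ico_add_one_right_eq_Icc]
  rw [Fin.sum_univ_succ, Fin.sum_univ_castSucc, hIcc]
  simp [stationaryWeight]

lemma stationaryWeight_nonneg {n : ℕ} (hp : ∀ i ∈ Finset.Icc 1 n, 0 ≤ p i ∧ p i ≤ 1)
    (i : Fin (n + 1)) : 0 ≤ stationaryWeight p n i := by
  unfold stationaryWeight
  split_ifs
  · exact sub_nonneg.2 (successProb_le_one p hp)
  · exact successProb_nonneg p (fun j hj => (hp j hj).1) i.is_le

lemma one_le_sum_stationaryWeight (hp : ∀ i ∈ Finset.Icc 1 (m + 1), 0 ≤ p i) :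
    1 ≤ ∑ i, stationaryWeight p (m + 1) i := by
  rw [sum_stationaryWeight]
  exact le_add_of_nonneg_right <| Finset.sum_nonneg fun i hi =>
    successProb_nonneg p hp ((Finset.mem_Icc.1 hi).2.trans m.le_succ)

lemma eq_inv_sum_smul_stationaryWeight {v : Fin (m + 2) → ℝ} (hsum : ∑ i, v i = 1)
    (hv : v ᵥ* multiHeraldedP (m + 1) p = v) :
    v = (∑ i, stationaryWeight p (m + 1) i)⁻¹ • stationaryWeight p (m + 1) := by
  have hvw := eq_smul_stationaryWeight_of_vecMul_eq_self p hv
  set c := v 0 + v (Fin.last _)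
  have hc : c * ∑ i, stationaryWeight p (m + 1) i = 1 := by
    rw [← hsum, Finset.mul_sum]
    exact Finset.sum_congr rfl fun i _ => (congrFun hvw i).symm
  rw [hvw, eq_inv_of_mul_eq_one_left hc]

end MultiHerald

open MultiHerald in
/-- Unique stationary distribution of `n`-round multiheralded entanglement
generation: with `D = 1 + ∑_{i=1}^{n−1} ∏_{j=1}^{i} p_j`, the vector given by
`π₀ = (1 − ∏_{i=1}^{n} p_i)/D` and `π_i = (∏_{j=1}^{i} p_j)/D` for `1 ≤ i ≤ n`
is stationary, is the unique stationary distribution, and in particular the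
equilibrium probability of the overall-success state `n` is
`(∏_{i=1}^{n} p_i)/(1 + ∑_{i=1}^{n−1} ∏_{j=1}^{i} p_j)`. -/
theorem multiheralded_stationary_distribution (n : ℕ) (hn : 1 ≤ n) (p : ℕ → ℝ)
    (hp : ∀ i ∈ Finset.Icc 1 n, 0 < p i ∧ p i ≤ 1) :
    let D : ℝ := 1 + ∑ i ∈ Finset.Icc 1 (n - 1), ∏ j ∈ Finset.Icc 1 i, p j
    let π : Fin (n + 1) → ℝ := fun i =>
      if (i : ℕ) = 0 then (1 - ∏ i ∈ Finset.Icc 1 n, p i) / D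
      else (∏ j ∈ Finset.Icc 1 (i : ℕ), p j) / D
    (∀ s, 0 ≤ π s) ∧ (∑ s, π s = 1) ∧ π ᵥ* multiHeraldedP n p = π ∧
      (∀ π' : Fin (n + 1) → ℝ, (∀ s, 0 ≤ π' s) → (∑ s, π' s = 1) →
        π' ᵥ* multiHeraldedP n p = π' → π' = π) ∧
      π (Fin.last n)
        = (∏ i ∈ Finset.Icc 1 n, p i)
            / (1 + ∑ i ∈ Finset.Icc 1 (n - 1), ∏ j ∈ Finset.Icc 1 i, p j) := by
  obtain ⟨m, rfl⟩ := Nat.exists_eq_add_of_le' hn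
  intro D π
  have hp' : ∀ i ∈ Finset.Icc 1 (m + 1), 0 ≤ p i ∧ p i ≤ 1 := fun i hi =>
    ⟨(hp i hi).1.le, (hp i hi).2⟩
  have hD : D = ∑ i, stationaryWeight p (m + 1) i := by
    rw [sum_stationaryWeight]
    rfl
  have hDpos : 0 < D :=
    hD ▸ one_pos.trans_le (one_le_sum_stationaryWeight p fun i hi => (hp' i hi).1)
  have hπ : π = D⁻¹ • stationaryWeight p (m + 1) := by
    funext i
    simp only [π, stationaryWeight, successProb, Pi.smul_apply, smul_eq_mul]
    split_ifs <;> ring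
  rw [hπ]
  refine ⟨fun s => ?_, ?_, ?_, fun v _ hsum hv => ?_, ?_⟩
  · exact smul_nonneg (inv_nonneg.2 hDpos.le) (stationaryWeight_nonneg p hp' s)
  · simp only [Pi.smul_apply, smul_eq_mul, ← Finset.mul_sum, ← hD]
    exact inv_mul_cancel₀ hDpos.ne'
  · rw [smul_vecMul, stationaryWeight_vecMul]
  · rw [hD]
    exact eq_inv_sum_smul_stationaryWeight p hsum hv
  · simp [stationaryWeight, successProb, D, div_eq_inv_mul]
end

section
/- Let n ≥ 1 and p₁,…,pₙ ∈ (0,1]. Then I − Qₙ is invertible, and the vector t = (I − Qₙ)⁻¹·𝟏 satisfies t₀ = (1 + ∑_{i=1}^{n−1} ∏_{j=1}^{i} p_j)/(∏_{i=1}^{n} p_i). (t₀ is the mean latency, in units of the step duration τ, of n-round multiheralded entanglement generation started from the failure state: the mean hitting time of the overall-success state n.) -/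
/-!
Extend a vector on the transient states `0, …, n-1` by the value `0` at the absorbing state `n`.
Then every row of `(I - Qₙ) t = 𝟏` reads `tᵢ = 1 + (1 - pᵢ₊₁) t₀ + pᵢ₊₁ tᵢ₊₁`. The chain climbs one
state at a time, so the mean time from `i` to `n` is `dₙ - dᵢ`, where `dₖ` is the mean time from `0`
to `k`; `dₖ₊₁ = (1 + dₖ) / pₖ₊₁` gives `dₖ = (∑_{m<k} p₁⋯pₘ) / (p₁⋯pₖ)`, and `t₀ = dₙ`.
For invertibility, the same rows with right-hand side `0` force `tᵢ₊₁ = tᵢ = t₀` step by step up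
to `t₀ = tₙ = 0`.
-/

open Matrix

/-- The matrix `Qₙ` obtained from the transition matrix of `n`-round multiheralded
entanglement generation by deleting the row and column of the overall-success
state `n`: row `i` (for `0 ≤ i ≤ n−1`) has entry `1 − p (i+1)` in column `0` and
entry `p (i+1)` in column `i+1` (when `i+1 ≤ n−1`), and zeros elsewhere. -/
def multiHeraldedQ (n : ℕ) (p : ℕ → ℝ) : Matrix (Fin n) (Fin n) ℝ :=
  fun i j =>
    if (j : ℕ) = 0 then 1 - p ((i : ℕ) + 1)
    else if (j : ℕ) = (i : ℕ) + 1 then p ((i : ℕ) + 1)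
    else 0

open Finset

variable {n : ℕ} {p : ℕ → ℝ}

theorem one_sub_multiHeraldedQ_mulVec_apply {w : ℕ → ℝ} (hw : w n = 0) (i : Fin n) :
    ((1 - multiHeraldedQ n p) *ᵥ fun j : Fin n => w j) i
      = w i - (1 - p (i + 1)) * w 0 - p (i + 1) * w (i + 1) := by
  have hQ : (multiHeraldedQ n p *ᵥ fun j : Fin n => w j) i
      = ∑ j ∈ range n, ((if j = 0 then (1 - p (i + 1)) * w j else 0)
        + if i + 1 = j then p (i + 1) * w j else 0) := by
    rw [mulVec, dotProduct, ← Fin.sum_univ_eq_sum_range]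
    refine sum_congr rfl fun j _ => ?_
    unfold multiHeraldedQ
    split_ifs <;> grind
  have hlast :
      (if (i : ℕ) + 1 ∈ range n then p (i + 1) * w (i + 1) else 0) = p (i + 1) * w (i + 1) := by
    split_ifs with h
    · rfl
    · rw [show (i : ℕ) + 1 = n by grind, hw, mul_zero]
  rw [sub_mulVec, one_mulVec, Pi.sub_apply, hQ, sum_add_distrib, sum_ite_eq', sum_ite_eq,
    if_pos (mem_range.mpr i.pos), hlast]
  ring

theorem eq_zero_of_one_sub_multiHeraldedQ_mulVec_eq_zero (hp : ∀ i ∈ Icc 1 n, p i ≠ 0)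
    {v : Fin n → ℝ} (hv : (1 - multiHeraldedQ n p) *ᵥ v = 0) : v = 0 := by
  set w : ℕ → ℝ := fun i => if h : i < n then v ⟨i, h⟩ else 0
  have hvw : v = fun j : Fin n => w j := by simp [w]
  have hwn : w n = 0 := by simp [w]
  have hrow (i : ℕ) (hi : i < n) : w i - (1 - p (i + 1)) * w 0 - p (i + 1) * w (i + 1) = 0 := by
    rw [← one_sub_multiHeraldedQ_mulVec_apply hwn ⟨i, hi⟩, ← hvw, hv, Pi.zero_apply]
  have hconst (i : ℕ) (hi : i ≤ n) : w i = w 0 := by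
    induction i with
    | zero => rfl
    | succ i ih =>
      have hi' := ih (by omega)
      have hstep : p (i + 1) * (w (i + 1) - w 0) = 0 := by linear_combination hi' - hrow i hi
      have hpi : p (i + 1) ≠ 0 := hp (i + 1) (mem_Icc.mpr ⟨by omega, hi⟩)
      exact sub_eq_zero.mp ((mul_eq_zero.mp hstep).resolve_left hpi)
  have hw0 : w 0 = 0 := (hconst n le_rfl).symm.trans hwn
  ext j
  rw [hvw]
  exact (hconst j j.is_le').trans hw0

theorem isUnit_one_sub_multiHeraldedQ (hp : ∀ i ∈ Icc 1 n, p i ≠ 0) :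
    IsUnit (1 - multiHeraldedQ n p) :=
  mulVec_injective_iff_isUnit.mp fun _ _ h => sub_eq_zero.mp <|
    eq_zero_of_one_sub_multiHeraldedQ_mulVec_eq_zero hp (by rw [mulVec_sub, h, sub_self])

noncomputable def meanReachTime (p : ℕ → ℝ) (k : ℕ) : ℝ :=
  (∑ m ∈ range k, ∏ j ∈ Icc 1 m, p j) / ∏ j ∈ Icc 1 k, p j

@[simp]
theorem meanReachTime_zero (p : ℕ → ℝ) : meanReachTime p 0 = 0 := by
  simp [meanReachTime]

theorem mul_meanReachTime_succ {k : ℕ} (hk : ∏ j ∈ Icc 1 (k + 1), p j ≠ 0) :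
    p (k + 1) * meanReachTime p (k + 1) = 1 + meanReachTime p k := by
  rw [prod_Icc_succ_top (by omega)] at hk
  obtain ⟨hP, hpk⟩ := mul_ne_zero_iff.mp hk
  rw [meanReachTime, meanReachTime, sum_range_succ, prod_Icc_succ_top (by omega)]
  field_simp
  ring

theorem one_sub_multiHeraldedQ_mulVec_meanReachTime (hp : ∀ i ∈ Icc 1 n, p i ≠ 0) :
    (1 - multiHeraldedQ n p) *ᵥ (fun i : Fin n => meanReachTime p n - meanReachTime p i)
      = fun _ => 1 := by
  ext i
  rw [one_sub_multiHeraldedQ_mulVec_apply (w := fun k => meanReachTime p n - meanReachTime p k)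
    (sub_self _)]
  have hi : ∏ j ∈ Icc 1 ((i : ℕ) + 1), p j ≠ 0 :=
    prod_ne_zero_iff.mpr fun j hj => hp j (by grind)
  linear_combination mul_meanReachTime_succ hi + (1 - p (i + 1)) * meanReachTime_zero p

/-- Mean latency of `n`-round multiheralded entanglement generation via the
fundamental matrix: for `p₁,…,pₙ ∈ (0,1]`, `I − Qₙ` is invertible and
`t = (I − Qₙ)⁻¹·𝟏` satisfies
`t₀ = (1 + ∑_{i=1}^{n−1} ∏_{j=1}^{i} p_j)/(∏_{i=1}^{n} p_i)`. -/
theorem multiheralded_mean_latency (n : ℕ) (hn : 0 < n) (p : ℕ → ℝ)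
    (hp : ∀ i ∈ Finset.Icc 1 n, 0 < p i ∧ p i ≤ 1) :
    let t : Fin n → ℝ := (1 - multiHeraldedQ n p)⁻¹ *ᵥ (fun _ => 1)
    IsUnit (1 - multiHeraldedQ n p) ∧
      t ⟨0, hn⟩
        = (1 + ∑ i ∈ Finset.Icc 1 (n - 1), ∏ j ∈ Finset.Icc 1 i, p j)
            / (∏ i ∈ Finset.Icc 1 n, p i) := by
  have hp' : ∀ i ∈ Icc 1 n, p i ≠ 0 := fun i hi => (hp i hi).1.ne'
  have hunit := isUnit_one_sub_multiHeraldedQ hp'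
  refine ⟨hunit, ?_⟩
  rw [← one_sub_multiHeraldedQ_mulVec_meanReachTime hp', mulVec_mulVec,
    nonsing_inv_mul _ ((isUnit_iff_isUnit_det _).mp hunit), one_mulVec]
  show meanReachTime p n - meanReachTime p 0 = _
  rw [meanReachTime_zero, sub_zero, meanReachTime, sum_range_eq_add_Ico _ hn,
    ← Ico_add_one_right_eq_Icc 1 (n - 1), Nat.sub_one_add_one hn.ne', Icc_eq_empty_of_lt one_pos,
    prod_empty]
end

section
/- Let n ≥ 1 and p₁,…,pₙ ∈ (0,1]. Let N = (I − Qₙ)⁻¹, t = N·𝟏, and v = (2N − I)·t − t ⊙ t, where ⊙ denotes entrywise (Hadamard) product. Then v₀ = ((1 + ∑_{i=1}^{n−1} ∏_{j=1}^{i} p_j)/(∏_{i=1}^{n} p_i))² − (2n−1 + ∑_{i=1}^{n−1} (2i−1)·∏_{j=1}^{n−i} p_j)/(∏_{i=1}^{n} p_i). (v₀ is the variance of the latency, in units of τ², of n-round multiheralded entanglement generation started from the failure state; for n = 2 this recovers the double-heralded result ((1+p₁)/(p₁p₂))² − (3+p₁)/(p₁p₂), and when all p_i = 1 it equals n² − (2n−1+(n−1)²)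 = 0.) -/
open Matrix

/-! Row `i` of `I - Qₙ` only couples `xᵢ`, `xᵢ₊₁` and `x₀`, so `(I - Qₙ) x = g` is solved by
back substitution: writing `Πᵢₖ = p_{i+1} ⋯ p_k`, the solution is
`xᵢ = ∑_{i ≤ k < n} Πᵢₖ gₖ + x₀ (1 - Πᵢₙ)`, and the row `i = 0` forces
`x₀ = (∑_{k < n} Π₀ₖ gₖ) / Π₀ₙ`. Since this solves the system for every `g` once `Π₀ₙ ≠ 0`,
`I - Qₙ` is invertible and `N g` is this vector. Taking `g = 𝟏` gives `t`, and then `g = t`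
gives `(N t)₀`; after exchanging a double sum, `v₀ = 2 (N t)₀ - t₀ - t₀²` is the claimed
expression up to the reflection `k ↦ n - k` of the summation index. -/

open Finset

namespace MultiHeralded

variable {n : ℕ} {p g : ℕ → ℝ}

lemma multiHeraldedQ_mulVec (f : ℕ → ℝ) (hf : f n = 0) (i : Fin n) :
    (multiHeraldedQ n p *ᵥ fun j : Fin n => f j) i
      = (1 - p (i + 1)) * f 0 + p (i + 1) * f (i + 1) := by
  have hsplit : ∀ j : Fin n, multiHeraldedQ n p i j * f j
      = (if (j : ℕ) = 0 then (1 - p (i + 1)) * f 0 else 0)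
        + (if (j : ℕ) = i + 1 then p (i + 1) * f (i + 1) else 0) := by
    intro j
    by_cases h0 : (j : ℕ) = 0
    · simp [multiHeraldedQ, h0]
    · by_cases h1 : (j : ℕ) = i + 1 <;> simp [multiHeraldedQ, h0, h1]
  simp only [mulVec, dotProduct, hsplit, sum_add_distrib]
  rw [Fin.sum_univ_eq_sum_range (fun j => if j = 0 then (1 - p (i + 1)) * f 0 else 0),
    Fin.sum_univ_eq_sum_range (fun j => if j = i + 1 then p (i + 1) * f (i + 1) else 0),
    sum_ite_eq', sum_ite_eq', if_pos (by simp [i.pos])]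
  split_ifs with h
  · rfl
  · rw [show (i : ℕ) + 1 = n by simp at h; omega, hf, mul_zero]

lemma one_sub_multiHeraldedQ_mulVec (f : ℕ → ℝ) (hf : f n = 0) (i : Fin n) :
    ((1 - multiHeraldedQ n p) *ᵥ fun j : Fin n => f j) i
      = f i - p (i + 1) * f (i + 1) - (1 - p (i + 1)) * f 0 := by
  rw [sub_mulVec, one_mulVec, Pi.sub_apply, multiHeraldedQ_mulVec f hf]
  ring

lemma prod_Ioc_eq_mul_prod_Ioc_succ {M : Type*} [CommMonoid M] (f : ℕ → M) {i k : ℕ}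
    (h : i < k) : ∏ j ∈ Ioc i k, f j = f (i + 1) * ∏ j ∈ Ioc (i + 1) k, f j := by
  rw [mul_prod_Ioc_eq_prod_Icc h, Icc_add_one_left_eq_Ioc]

noncomputable def tailSum (n : ℕ) (p g : ℕ → ℝ) (i : ℕ) : ℝ :=
  ∑ k ∈ Ico i n, (∏ j ∈ Ioc i k, p j) * g k

lemma tailSum_self : tailSum n p g n = 0 := by
  simp [tailSum]

lemma tailSum_of_lt {i : ℕ} (h : i < n) :
    tailSum n p g i = g i + p (i + 1) * tailSum n p g (i + 1) := by
  rw [tailSum, sum_eq_sum_Ico_succ_bot h, Ioc_self, prod_empty, one_mul, tailSum, mul_sum]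
  congr 1
  refine sum_congr rfl fun k hk => ?_
  rw [prod_Ioc_eq_mul_prod_Ioc_succ p (by simp at hk; omega), mul_assoc]

noncomputable def solution (n : ℕ) (p g : ℕ → ℝ) (i : ℕ) : ℝ :=
  tailSum n p g i + tailSum n p g 0 / (∏ j ∈ Ioc 0 n, p j) * (1 - ∏ j ∈ Ioc i n, p j)

lemma solution_self : solution n p g n = 0 := by
  simp [solution, tailSum_self]

lemma solution_zero (hP : ∏ j ∈ Ioc 0 n, p j ≠ 0) :
    solution n p g 0 = tailSum n p g 0 / ∏ j ∈ Ioc 0 n, p j := by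
  rw [solution]
  field_simp
  ring

lemma one_sub_multiHeraldedQ_mulVec_solution (hP : ∏ j ∈ Ioc 0 n, p j ≠ 0) :
    (1 - multiHeraldedQ n p) *ᵥ (fun i : Fin n => solution n p g i) = fun i : Fin n => g i := by
  funext i
  rw [one_sub_multiHeraldedQ_mulVec _ solution_self, solution_zero hP, solution, solution,
    tailSum_of_lt i.isLt, prod_Ioc_eq_mul_prod_Ioc_succ p i.isLt]
  ring

lemma isUnit_one_sub_multiHeraldedQ (hP : ∏ j ∈ Ioc 0 n, p j ≠ 0) :
    IsUnit (1 - multiHeraldedQ n p) := by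
  refine mulVec_surjective_iff_isUnit.mp fun g =>
    ⟨fun i => solution n p (fun k => if h : k < n then g ⟨k, h⟩ else 0) i, ?_⟩
  rw [one_sub_multiHeraldedQ_mulVec_solution hP]
  simp

lemma inv_one_sub_multiHeraldedQ_mulVec (hP : ∏ j ∈ Ioc 0 n, p j ≠ 0) :
    (1 - multiHeraldedQ n p)⁻¹ *ᵥ (fun i : Fin n => g i) = fun i : Fin n => solution n p g i := by
  have := (isUnit_one_sub_multiHeraldedQ hP).invertible
  exact inv_mulVec_eq_vec (one_sub_multiHeraldedQ_mulVec_solution hP).symm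

lemma tailSum_one_zero : tailSum n p (fun _ => 1) 0 = ∑ k ∈ Ico 0 n, ∏ j ∈ Ioc 0 k, p j := by
  simp [tailSum]

lemma sum_prod_mul_tailSum_one :
    ∑ k ∈ Ico 0 n, (∏ j ∈ Ioc 0 k, p j) * tailSum n p (fun _ => 1) k
      = ∑ k ∈ Ico 0 n, ((k : ℝ) + 1) * ∏ j ∈ Ioc 0 k, p j := by
  simp only [tailSum, mul_one, mul_sum]
  rw [sum_Ico_Ico_comm]
  refine sum_congr rfl fun m _ => ?_
  rw [sum_congr rfl fun k hk => prod_Ioc_consecutive p k.zero_le (by simp at hk; omega)]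
  simp

lemma tailSum_solution_one_zero :
    tailSum n p (solution n p fun _ => 1) 0
      = ∑ k ∈ Ico 0 n, ((k : ℝ) + 1) * ∏ j ∈ Ioc 0 k, p j
        + tailSum n p (fun _ => 1) 0 / (∏ j ∈ Ioc 0 n, p j)
          * (tailSum n p (fun _ => 1) 0 - n * ∏ j ∈ Ioc 0 n, p j) := by
  have hterm : ∀ k ∈ Ico 0 n, (∏ j ∈ Ioc 0 k, p j) * solution n p (fun _ => 1) k
      = (∏ j ∈ Ioc 0 k, p j) * tailSum n p (fun _ => 1) k
        + tailSum n p (fun _ => 1) 0 / (∏ j ∈ Ioc 0 n, p j)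
          * ((∏ j ∈ Ioc 0 k, p j) - ∏ j ∈ Ioc 0 n, p j) := by
    intro k hk
    rw [solution, ← prod_Ioc_consecutive p k.zero_le (by simp at hk; omega : k ≤ n)]
    ring
  conv_lhs => rw [tailSum]
  rw [sum_congr rfl hterm, sum_add_distrib, sum_prod_mul_tailSum_one, ← mul_sum, sum_sub_distrib,
    ← tailSum_one_zero, sum_const, Nat.card_Ico, nsmul_eq_mul, Nat.sub_zero]

lemma hitting_variance_zero (hP : ∏ j ∈ Ioc 0 n, p j ≠ 0) :
    2 * solution n p (solution n p fun _ => 1) 0 - solution n p (fun _ => 1) 0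
        - solution n p (fun _ => 1) 0 ^ 2
      = ((∑ k ∈ Ico 0 n, ∏ j ∈ Ioc 0 k, p j) / ∏ j ∈ Ioc 0 n, p j) ^ 2
        - (∑ k ∈ Ico 0 n, (2 * ((n : ℝ) - k) - 1) * ∏ j ∈ Ioc 0 k, p j)
          / ∏ j ∈ Ioc 0 n, p j := by
  have hweighted : ∑ k ∈ Ico 0 n, (2 * ((n : ℝ) - k) - 1) * ∏ j ∈ Ioc 0 k, p j
      = (2 * n + 1) * ∑ k ∈ Ico 0 n, ∏ j ∈ Ioc 0 k, p j
        - 2 * ∑ k ∈ Ico 0 n, ((k : ℝ) + 1) * ∏ j ∈ Ioc 0 k, p j := by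
    rw [mul_sum, mul_sum, ← sum_sub_distrib]
    exact sum_congr rfl fun k _ => by ring
  rw [solution_zero hP, solution_zero hP, tailSum_solution_one_zero, tailSum_one_zero, hweighted]
  field_simp
  ring

lemma sum_Ico_prod_eq_one_add (hn : 0 < n) :
    ∑ k ∈ Ico 0 n, ∏ j ∈ Ioc 0 k, p j = 1 + ∑ i ∈ Icc 1 (n - 1), ∏ j ∈ Icc 1 i, p j := by
  rw [sum_eq_sum_Ico_succ_bot hn, Ioc_self, prod_empty,
    Icc_sub_one_right_eq_Ico_of_not_isMin (by simp [hn.ne']) 1]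
  rfl

lemma sum_Ico_weighted_prod_eq (hn : 0 < n) :
    ∑ k ∈ Ico 0 n, (2 * ((n : ℝ) - k) - 1) * ∏ j ∈ Ioc 0 k, p j
      = 2 * n - 1 + ∑ i ∈ Icc 1 (n - 1), (2 * (i : ℝ) - 1) * ∏ j ∈ Icc 1 (n - i), p j := by
  have hreflect :=
    sum_Ico_reflect (fun k => (2 * ((n : ℝ) - k) - 1) * ∏ j ∈ Ioc 0 k, p j) 1 n.le_succ
  rw [Nat.add_sub_cancel_left, Nat.add_sub_cancel] at hreflect
  rw [sum_eq_sum_Ico_succ_bot hn, Ioc_self, prod_empty,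
    Icc_sub_one_right_eq_Ico_of_not_isMin (by simp [hn.ne']) 1, ← hreflect]
  congr 1
  · push_cast
    ring
  · refine sum_congr rfl fun i hi => ?_
    rw [Nat.cast_sub (by simp at hi; omega), sub_sub_cancel]
    rfl

end MultiHeralded

open MultiHeralded in
/-- Latency variance of `n`-round multiheralded entanglement generation via the
fundamental matrix: for `p₁,…,pₙ ∈ (0,1]`, with `N = (I − Qₙ)⁻¹`, `t = N·𝟏`, and
`v = (2N − I)·t − t ⊙ t` (Hadamard product),
`v₀ = ((1 + ∑_{i=1}^{n−1} ∏_{j=1}^{i} p_j)/(∏_{i=1}^{n} p_i))²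
      − (2n−1 + ∑_{i=1}^{n−1} (2i−1)∏_{j=1}^{n−i} p_j)/(∏_{i=1}^{n} p_i)`. -/
theorem multiheralded_latency_variance (n : ℕ) (hn : 0 < n) (p : ℕ → ℝ)
    (hp : ∀ i ∈ Finset.Icc 1 n, 0 < p i ∧ p i ≤ 1) :
    let N : Matrix (Fin n) (Fin n) ℝ := (1 - multiHeraldedQ n p)⁻¹
    let t : Fin n → ℝ := N *ᵥ (fun _ => 1)
    let v : Fin n → ℝ := (2 • N - 1) *ᵥ t - t * t
    v ⟨0, hn⟩
      = ((1 + ∑ i ∈ Finset.Icc 1 (n - 1), ∏ j ∈ Finset.Icc 1 i, p j)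
            / (∏ i ∈ Finset.Icc 1 n, p i)) ^ 2
        - (2 * (n : ℝ) - 1
            + ∑ i ∈ Finset.Icc 1 (n - 1),
                (2 * (i : ℝ) - 1) * ∏ j ∈ Finset.Icc 1 (n - i), p j)
            / (∏ i ∈ Finset.Icc 1 n, p i) := by
  intro N t v
  have hP : ∏ j ∈ Ioc 0 n, p j ≠ 0 := prod_ne_zero_iff.mpr fun j hj => (hp j hj).1.ne'
  have ht : t = fun i : Fin n => solution n p (fun _ => 1) i :=
    inv_one_sub_multiHeraldedQ_mulVec (g := fun _ => 1) hP
  have hu : N *ᵥ t = fun i : Fin n => solution n p (solution n p fun _ => 1) i := by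
    rw [ht]
    exact inv_one_sub_multiHeraldedQ_mulVec hP
  have hv : v ⟨0, hn⟩ = 2 * (N *ᵥ t) ⟨0, hn⟩ - t ⟨0, hn⟩ - t ⟨0, hn⟩ ^ 2 := by
    rw [show v = (2 • N - 1) *ᵥ t - t * t from rfl, sub_mulVec, smul_mulVec, one_mulVec]
    rw [Pi.sub_apply, Pi.sub_apply, Pi.smul_apply, Pi.mul_apply, nsmul_eq_mul, Nat.cast_ofNat]
    ring
  rw [hv, hu, ht, hitting_variance_zero hP, sum_Ico_prod_eq_one_add hn, sum_Ico_weighted_prod_eq hn]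
  rfl
end

section
/- Let p_l, p_r ∈ (0,1] and p_s ∈ [0,1]. Set X = p_l + p_r − p_l·p_r and D = 2p_l p_r + (1−p_l)p_r² + (1−p_r)p_l² − p_l p_r (1−p_l)(1−p_r). The row vector π indexed by (00,01,10,11,S) with π₀₀ = p_l p_r (1 − X·p_s)/D, π₀₁ = (1−p_l)p_r²/D, π₁₀ = p_l²(1−p_r)/D, π₁₁ = p_l p_r X/D, π_S = p_l p_r p_s X/D is a stationary distribution of P_shs: all entries are nonnegative, they sum to 1, and π·P_shs = π; moreover it is the unique such vector. In particular the equilibrium success probability is π_S = p_l p_r p_s (1 − (1−p_l)(1−p_r)) / (2p_l p_r + (1−p_l)p_r² + (1−p_r)p_l² − p_l p_r (1−p_l)(1−p_r)). -/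
open Matrix

/-- Unique stationary distribution of two-link entanglement distribution with
single-heralded entanglement generation (link success probabilities `p_l, p_r`)
and entanglement swapping (success probability `p_s`). States are ordered
`(00, 01, 10, 11, S)`. With `X = p_l + p_r − p_l p_r` and
`D = 2p_l p_r + (1−p_l)p_r² + (1−p_r)p_l² − p_l p_r(1−p_l)(1−p_r)`, the stationary
vector is `(p_l p_r(1 − X p_s)/D, (1−p_l)p_r²/D, p_l²(1−p_r)/D, p_l p_r X/D,
p_l p_r p_s X/D)`; in particular the equilibrium success probability is
`π_S = p_l p_r p_s (1 − (1−p_l)(1−p_r))/D`. -/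
theorem two_link_single_heralded_stationary (pl pr ps : ℝ)
    (hl : 0 < pl) (hl' : pl ≤ 1) (hr : 0 < pr) (hr' : pr ≤ 1)
    (hs : 0 ≤ ps) (hs' : ps ≤ 1) :
    let P : Matrix (Fin 5) (Fin 5) ℝ :=
      !![(1 - pl) * (1 - pr), (1 - pl) * pr, pl * (1 - pr), pl * pr, 0;
         0, 1 - pl, 0, pl, 0;
         0, 0, 1 - pr, pr, 0;
         1 - ps, 0, 0, 0, ps;
         (1 - pl) * (1 - pr), (1 - pl) * pr, pl * (1 - pr), pl * pr, 0]
    let X : ℝ := pl + pr - pl * pr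
    let D : ℝ := 2 * pl * pr + (1 - pl) * pr ^ 2 + (1 - pr) * pl ^ 2
      - pl * pr * (1 - pl) * (1 - pr)
    let π : Fin 5 → ℝ :=
      ![pl * pr * (1 - X * ps) / D, (1 - pl) * pr ^ 2 / D, pl ^ 2 * (1 - pr) / D,
        pl * pr * X / D, pl * pr * ps * X / D]
    (∀ s, 0 ≤ π s) ∧ (∑ s, π s = 1) ∧ π ᵥ* P = π ∧
      (∀ π' : Fin 5 → ℝ, (∀ s, 0 ≤ π' s) → (∑ s, π' s = 1) → π' ᵥ* P = π' → π' = π) ∧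
      π 4 = pl * pr * ps * (1 - (1 - pl) * (1 - pr))
        / (2 * pl * pr + (1 - pl) * pr ^ 2 + (1 - pr) * pl ^ 2
            - pl * pr * (1 - pl) * (1 - pr)) := by
  intro P X D π
  have hql : 0 ≤ 1 - pl := by linarith
  have hqr : 0 ≤ 1 - pr := by linarith
  have hD : 0 < D := by
    simp only [D]
    nlinarith [mul_pos hl hr, mul_nonneg hql hqr, sq_nonneg pl, sq_nonneg pr,
      mul_nonneg hql (sq_nonneg pr), mul_nonneg hqr (sq_nonneg pl),
      mul_nonneg (mul_nonneg hl.le hr.le) (mul_nonneg hql hqr)]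
  have hDne : D ≠ 0 := ne_of_gt hD
  have hXps : X * ps ≤ 1 := by
    simp only [X]
    nlinarith [mul_nonneg hql hqr]
  have hX0 : 0 ≤ X := by simp only [X]; nlinarith
  refine ⟨?_, ?_, ?_, ?_, ?_⟩
  · intro s
    fin_cases s <;>
      simp [π] <;>
      apply div_nonneg _ hD.le
    · nlinarith [mul_pos hl hr]
    · positivity
    · positivity
    · positivity
    · positivity
  · simp [π, Fin.sum_univ_five]
    field_simp
    simp only [X, D]
    ring
  · funext j
    fin_cases j <;>
      simp [π, P, Matrix.vecMul, dotProduct, Fin.sum_univ_five] <;>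
      field_simp <;> simp only [X, D] <;> ring
  · intro π' hpos hsum hstat
    have h0 := congrFun hstat 0
    have h1 := congrFun hstat 1
    have h2 := congrFun hstat 2
    have h3 := congrFun hstat 3
    have h4 := congrFun hstat 4
    simp [P, Matrix.vecMul, dotProduct, Fin.sum_univ_five] at h0 h1 h2 h3 h4
    rw [Fin.sum_univ_five] at hsum
    set a := π' 0 with ha
    set b := π' 1 with hb'
    set c := π' 2 with hc'
    set d := π' 3 with hd'
    set e := π' 4 with he'
    have he : e = d * ps := by linear_combination -h4
    have hb : pl * b = (1 - pl) * pr * (a + e) := by linear_combination -h1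
    have hc : pr * c = (1 - pr) * pl * (a + e) := by linear_combination -h2
    have hd : d = (a + e) * X := by
      simp only [X]
      linear_combination h0 - he
    have hdX : d = (a + e) * (pl + pr - pl * pr) := hd
    have hsD2 : (a + e) * (2 * pl * pr + (1 - pl) * pr ^ 2 + (1 - pr) * pl ^ 2 - pl * pr * (1 - pl) * (1 - pr)) = pl * pr := by
      linear_combination pl * pr * hsum - pr * hb - pl * hc - pl * pr * hdX
    have hDne2 : (2 * pl * pr + (1 - pl) * pr ^ 2 + (1 - pr) * pl ^ 2 - pl * pr * (1 - pl) * (1 - pr)) ≠ 0 := hDne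
    have g0 : a = π 0 := by
      have hv : π 0 = pl * pr * (1 - X * ps) / D := by simp [π]
      rw [hv]; simp only [X, D]; rw [eq_div_iff hDne2]
      linear_combination (1 - (pl + pr - pl * pr) * ps) * hsD2 - (2 * pl * pr + (1 - pl) * pr ^ 2 + (1 - pr) * pl ^ 2 - pl * pr * (1 - pl) * (1 - pr)) * he - (2 * pl * pr + (1 - pl) * pr ^ 2 + (1 - pr) * pl ^ 2 - pl * pr * (1 - pl) * (1 - pr)) * ps * hdX
    have g1 : b = π 1 := by
      have hv : π 1 = (1 - pl) * pr ^ 2 / D := by simp [π]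
      rw [hv]; simp only [D]; rw [eq_div_iff hDne2]
      refine mul_left_cancel₀ (ne_of_gt hl) ?_
      linear_combination (2 * pl * pr + (1 - pl) * pr ^ 2 + (1 - pr) * pl ^ 2 - pl * pr * (1 - pl) * (1 - pr)) * hb + (1 - pl) * pr * hsD2
    have g2 : c = π 2 := by
      have hv : π 2 = pl ^ 2 * (1 - pr) / D := by simp [π]
      rw [hv]; simp only [D]; rw [eq_div_iff hDne2]
      refine mul_left_cancel₀ (ne_of_gt hr) ?_
      linear_combination (2 * pl * pr + (1 - pl) * pr ^ 2 + (1 - pr) * pl ^ 2 - pl * pr * (1 - pl) * (1 - pr)) * hc + (1 - pr) * pl * hsD2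
    have g3 : d = π 3 := by
      have hv : π 3 = pl * pr * X / D := by simp [π]
      rw [hv]; simp only [X, D]; rw [eq_div_iff hDne2]
      linear_combination (2 * pl * pr + (1 - pl) * pr ^ 2 + (1 - pr) * pl ^ 2 - pl * pr * (1 - pl) * (1 - pr)) * hdX + (pl + pr - pl * pr) * hsD2
    have g4 : e = π 4 := by
      have hv : π 4 = pl * pr * ps * X / D := by simp [π]
      rw [hv]; simp only [X, D]; rw [eq_div_iff hDne2]
      linear_combination (2 * pl * pr + (1 - pl) * pr ^ 2 + (1 - pr) * pl ^ 2 - pl * pr * (1 - pl) * (1 - pr)) * he + (2 * pl * pr + (1 - pl) * pr ^ 2 + (1 - pr) * pl ^ 2 - pl * pr * (1 - pl) * (1 - pr)) * ps * hdX + ps * (pl + pr - pl * pr) * hsD2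
    funext s
    fin_cases s
    · exact g0
    · exact g1
    · exact g2
    · exact g3
    · exact g4
  · have hv : π 4 = pl * pr * ps * X / D := by simp [π]
    rw [hv]; simp only [X, D]; ring
end

section
/- Let p_l, p_r, p_s ∈ (0,1]. Then I − Q_shs is invertible, and the vector t = (I − Q_shs)⁻¹·𝟏 satisfies t₀₀ = (p_l p_r + p_l² + p_r² − p_l² p_r²)/(p_l p_r p_s (p_l + p_r − p_l p_r)). (t₀₀ is the mean latency, in units of the step duration τ, of two-link entanglement distribution with single-heralded entanglement generation started from the empty state 00: the mean hitting time of the swapping-success state S. It equals 1/π_S, the reciprocal of the equilibrium probability of state S.) -/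
open Matrix

/-! Solving the first-step equations `(I − Q) t = 𝟏` by hand gives an explicit vector `t`;
since `det (I − Q) = p_l p_r p_s (p_l + p_r − p_l p_r) ≠ 0`, it is the unique solution
`(I − Q)⁻¹ 𝟏`. -/

theorem add_sub_mul_pos {α : Type*} [CommRing α] [LinearOrder α] [IsStrictOrderedRing α]
    {a b : α} (ha : 0 < a) (ha' : a ≤ 1) (hb : 0 < b) : 0 < a + b - a * b := by
  have : 0 ≤ b * (1 - a) := mul_nonneg hb.le (sub_nonneg.2 ha')
  linarith [mul_comm a b]

theorem Matrix.inv_mulVec_eq_of_mulVec_eq {n α : Type*} [Fintype n] [DecidableEq n] [CommRing α]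
    {A : Matrix n n α} (hA : IsUnit A) {u v : n → α} (h : A *ᵥ v = u) : A⁻¹ *ᵥ u = v := by
  have := hA.invertible
  exact inv_mulVec_eq_vec h.symm

def singleHeraldedQ (pl pr ps : ℝ) : Matrix (Fin 4) (Fin 4) ℝ :=
  !![(1 - pl) * (1 - pr), (1 - pl) * pr, pl * (1 - pr), pl * pr;
     0, 1 - pl, 0, pl;
     0, 0, 1 - pr, pr;
     1 - ps, 0, 0, 0]

namespace singleHeraldedQ

variable (pl pr ps : ℝ)

theorem one_sub_eq : 1 - singleHeraldedQ pl pr ps =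
    !![pl + pr - pl * pr, -((1 - pl) * pr), -(pl * (1 - pr)), -(pl * pr);
       0, pl, 0, -pl;
       0, 0, pr, -pr;
       -(1 - ps), 0, 0, 1] := by
  ext i j
  fin_cases i <;> fin_cases j <;> simp [singleHeraldedQ]; ring

theorem det_one_sub :
    (1 - singleHeraldedQ pl pr ps).det = pl * pr * ps * (pl + pr - pl * pr) := by
  rw [one_sub_eq, det_succ_row_zero]
  simp [Fin.sum_univ_succ, det_fin_three, Fin.succAbove]
  ring

/-- First-step analysis: `t₁₁ = 1 + q_s t₀₀`, and from `01` (resp. `10`) the chain waits a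
geometric time of mean `1/p_l` (resp. `1/p_r`) before reaching `11`. -/
noncomputable def meanHittingTime : Fin 4 → ℝ :=
  let t₀₀ := (pl * pr + pl ^ 2 + pr ^ 2 - pl ^ 2 * pr ^ 2) / (pl * pr * ps * (pl + pr - pl * pr))
  let t₁₁ := 1 + (1 - ps) * t₀₀
  ![t₀₀, t₁₁ + 1 / pl, t₁₁ + 1 / pr, t₁₁]

variable {pl pr ps}

theorem one_sub_mulVec_meanHittingTime (hl : pl ≠ 0) (hr : pr ≠ 0) (hs : ps ≠ 0)
    (hS : pl + pr - pl * pr ≠ 0) :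
    (1 - singleHeraldedQ pl pr ps) *ᵥ meanHittingTime pl pr ps = ![1, 1, 1, 1] := by
  rw [one_sub_eq]
  ext i
  fin_cases i <;> simp [meanHittingTime, mulVec, dotProduct, Fin.sum_univ_four] <;>
    field_simp <;> ring

end singleHeraldedQ

theorem two_link_single_heralded_mean_latency_general (pl pr ps : ℝ)
    (hl : 0 < pl) (hl' : pl ≤ 1) (hr : 0 < pr)
    (hs : 0 < ps) :
    let Q : Matrix (Fin 4) (Fin 4) ℝ :=
      !![(1 - pl) * (1 - pr), (1 - pl) * pr, pl * (1 - pr), pl * pr;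
         0, 1 - pl, 0, pl;
         0, 0, 1 - pr, pr;
         1 - ps, 0, 0, 0]
    let t : Fin 4 → ℝ := (1 - Q)⁻¹ *ᵥ ![1, 1, 1, 1]
    IsUnit (1 - Q) ∧
      t 0 = (pl * pr + pl ^ 2 + pr ^ 2 - pl ^ 2 * pr ^ 2)
        / (pl * pr * ps * (pl + pr - pl * pr)) := by
  intro Q t
  have hS := add_sub_mul_pos hl hl' hr
  have hQ : Q = singleHeraldedQ pl pr ps := rfl
  have hdet : (1 - Q).det ≠ 0 := by
    rw [hQ, singleHeraldedQ.det_one_sub]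
    positivity
  have hunit : IsUnit (1 - Q) := (isUnit_iff_isUnit_det _).2 hdet.isUnit
  have ht : t = singleHeraldedQ.meanHittingTime pl pr ps :=
    inv_mulVec_eq_of_mulVec_eq hunit <|
      singleHeraldedQ.one_sub_mulVec_meanHittingTime hl.ne' hr.ne' hs.ne' hS.ne'
  exact ⟨hunit, by rw [ht]; rfl⟩

/-- Mean latency of two-link entanglement distribution with single-heralded
entanglement generation via the fundamental matrix: for `p_l, p_r, p_s ∈ (0,1]`,
`I − Q_shs` is invertible and `t = (I − Q_shs)⁻¹·𝟏` satisfies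
`t₀₀ = (p_l p_r + p_l² + p_r² − p_l² p_r²)/(p_l p_r p_s (p_l + p_r − p_l p_r))`.
States are ordered `(00, 01, 10, 11)`. -/
theorem two_link_single_heralded_mean_latency (pl pr ps : ℝ)
    (hl : 0 < pl) (hl' : pl ≤ 1) (hr : 0 < pr) (hr' : pr ≤ 1)
    (hs : 0 < ps) (hs' : ps ≤ 1) :
    let Q : Matrix (Fin 4) (Fin 4) ℝ :=
      !![(1 - pl) * (1 - pr), (1 - pl) * pr, pl * (1 - pr), pl * pr;
         0, 1 - pl, 0, pl;
         0, 0, 1 - pr, pr;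
         1 - ps, 0, 0, 0]
    let t : Fin 4 → ℝ := (1 - Q)⁻¹ *ᵥ ![1, 1, 1, 1]
    IsUnit (1 - Q) ∧
      t 0 = (pl * pr + pl ^ 2 + pr ^ 2 - pl ^ 2 * pr ^ 2)
        / (pl * pr * ps * (pl + pr - pl * pr)) :=
  two_link_single_heralded_mean_latency_general pl pr ps hl hl' hr hs
end

section
/- Let p_l, p_r, p_s ∈ (0,1]. Let N = (I − Q_shs)⁻¹, t = N·𝟏, and v = (2N − I)·t − t ⊙ t, where ⊙ denotes entrywise (Hadamard) product. Then v₀₀ = ((p_l p_r + p_l² + p_r² − p_l² p_r²)/(p_l p_r p_s (p_l + p_r − p_l p_r)))² − (p_l² p_r (1−p_r)(2−p_r) + p_l³ (1−p_r)²(3+p_r) + 3p_r³ + p_l p_r (4 + 2p_r − 5p_r²))/(p_l p_r p_s (p_l + p_r − p_l p_r)²). (v₀₀ is the variance of the latency, in units of τ², of two-link entanglement distribution with single-heralded entanglement generation started from the empty state 00; e.g. for p_l = p_r = 1 it equals 4(1−p_s)/p_s², and for p_r = p_s = 1 it equals (1−p_l)/p_l².) -/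
/-!
The fundamental matrix `N = (I - Q)⁻¹` is never computed: `I - Q` is upper triangular apart from
the return `11 → 00`, so `(I - Q) x = b` is solved by back substitution for every right-hand side
`b`. This exhibits `I - Q` as invertible, gives `t = N 𝟏` and `N t`, and
`v₀₀ = 2 (N t)₀₀ - t₀₀ - t₀₀²` is then a rational-function identity.
-/

open Matrix

namespace Matrix

variable {n R : Type*} [Fintype n] [DecidableEq n] [CommRing R]

theorem inv_mulVec_eq_of_rightInverse {A : Matrix n n R} {S : (n → R) → n → R}
    (hS : Function.RightInverse S A.mulVec) (b : n → R) : A⁻¹ *ᵥ b = S b := by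
  have hA : IsUnit A.det :=
    (isUnit_iff_isUnit_det A).1 (mulVec_surjective_iff_isUnit.1 hS.surjective)
  conv_lhs => rw [← hS b]
  rw [mulVec_mulVec, nonsing_inv_mul A hA, one_mulVec]

end Matrix

section SingleHeralded

variable {K : Type*} [Field K]

def shsQ (pl pr ps : K) : Matrix (Fin 4) (Fin 4) K :=
  !![(1 - pl) * (1 - pr), (1 - pl) * pr, pl * (1 - pr), pl * pr;
     0, 1 - pl, 0, pl;
     0, 0, 1 - pr, pr;
     1 - ps, 0, 0, 0]

/-- Rows `01`, `10`, `11` express `x₀₁`, `x₁₀`, `x₁₁` through `x₀₀`; substituting them into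
row `00` leaves a linear equation in `x₀₀` alone. -/
def shsSolve (pl pr ps : K) (b : Fin 4 → K) : Fin 4 → K :=
  let x₀ := (b 0 + (pl + pr - pl * pr) * b 3 + (1 - pl) * pr / pl * b 1
      + pl * (1 - pr) / pr * b 2) / ((pl + pr - pl * pr) * ps)
  let x₃ := b 3 + (1 - ps) * x₀
  ![x₀, x₃ + b 1 / pl, x₃ + b 2 / pr, x₃]

theorem shsQ_mulVec (pl pr ps : K) (x : Fin 4 → K) :
    shsQ pl pr ps *ᵥ x =
      ![(1 - pl) * (1 - pr) * x 0 + (1 - pl) * pr * x 1 + pl * (1 - pr) * x 2 + pl * pr * x 3,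
        (1 - pl) * x 1 + pl * x 3, (1 - pr) * x 2 + pr * x 3, (1 - ps) * x 0] := by
  ext i
  fin_cases i <;> simp [shsQ, mulVec, dotProduct, Fin.sum_univ_four]

theorem one_sub_shsQ_mulVec_shsSolve {pl pr ps : K} (hl : pl ≠ 0) (hr : pr ≠ 0) (hs : ps ≠ 0)
    (hlr : pl + pr - pl * pr ≠ 0) :
    Function.RightInverse (shsSolve pl pr ps) (1 - shsQ pl pr ps).mulVec := by
  intro b
  rw [sub_mulVec, one_mulVec, shsQ_mulVec]
  ext i
  fin_cases i <;>
    · simp only [shsSolve, Pi.sub_apply, Fin.zero_eta, Fin.mk_one, Fin.reduceFinMk, Fin.isValue,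
        cons_val]
      field_simp
      ring

end SingleHeralded

theorem two_link_single_heralded_latency_variance_general (pl pr ps : ℝ)
    (hl : 0 < pl) (hl' : pl ≤ 1) (hr : 0 < pr)
    (hs : 0 < ps) :
    let Q : Matrix (Fin 4) (Fin 4) ℝ :=
      !![(1 - pl) * (1 - pr), (1 - pl) * pr, pl * (1 - pr), pl * pr;
         0, 1 - pl, 0, pl;
         0, 0, 1 - pr, pr;
         1 - ps, 0, 0, 0]
    let N : Matrix (Fin 4) (Fin 4) ℝ := (1 - Q)⁻¹
    let t : Fin 4 → ℝ := N *ᵥ ![1, 1, 1, 1]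
    let v : Fin 4 → ℝ := (2 • N - 1) *ᵥ t - t * t
    v 0 = ((pl * pr + pl ^ 2 + pr ^ 2 - pl ^ 2 * pr ^ 2)
            / (pl * pr * ps * (pl + pr - pl * pr))) ^ 2
      - (pl ^ 2 * pr * (1 - pr) * (2 - pr) + pl ^ 3 * (1 - pr) ^ 2 * (3 + pr)
          + 3 * pr ^ 3 + pl * pr * (4 + 2 * pr - 5 * pr ^ 2))
        / (pl * pr * ps * (pl + pr - pl * pr) ^ 2) := by
  intro Q N t v
  have hlr : 0 < pl + pr - pl * pr := by nlinarith
  have hN (b : Fin 4 → ℝ) : N *ᵥ b = shsSolve pl pr ps b :=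
    inv_mulVec_eq_of_rightInverse
      (one_sub_shsQ_mulVec_shsSolve hl.ne' hr.ne' hs.ne' hlr.ne') b
  have hv : v = 2 • shsSolve pl pr ps t - t - t * t := by
    simp only [v, sub_mulVec, smul_mulVec, one_mulVec, hN]
  have ht : t = shsSolve pl pr ps ![1, 1, 1, 1] := hN _
  rw [hv, ht]
  simp only [shsSolve, Pi.sub_apply, Pi.mul_apply, nsmul_eq_mul, Nat.cast_ofNat, Pi.ofNat_apply,
    Fin.isValue, cons_val]
  field_simp
  ring

/-- Latency variance of two-link entanglement distribution with single-heralded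
entanglement generation via the fundamental matrix: for `p_l, p_r, p_s ∈ (0,1]`,
with `N = (I − Q_shs)⁻¹`, `t = N·𝟏`, and `v = (2N − I)·t − t ⊙ t` (Hadamard
product), one has
`v₀₀ = ((p_l p_r + p_l² + p_r² − p_l² p_r²)/(p_l p_r p_s(p_l + p_r − p_l p_r)))²
  − (p_l² p_r(1−p_r)(2−p_r) + p_l³(1−p_r)²(3+p_r) + 3p_r³ + p_l p_r(4+2p_r−5p_r²))
      /(p_l p_r p_s (p_l + p_r − p_l p_r)²)`. States are ordered `(00,01,10,11)`. -/
theorem two_link_single_heralded_latency_variance (pl pr ps : ℝ)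
    (hl : 0 < pl) (hl' : pl ≤ 1) (hr : 0 < pr) (hr' : pr ≤ 1)
    (hs : 0 < ps) (hs' : ps ≤ 1) :
    let Q : Matrix (Fin 4) (Fin 4) ℝ :=
      !![(1 - pl) * (1 - pr), (1 - pl) * pr, pl * (1 - pr), pl * pr;
         0, 1 - pl, 0, pl;
         0, 0, 1 - pr, pr;
         1 - ps, 0, 0, 0]
    let N : Matrix (Fin 4) (Fin 4) ℝ := (1 - Q)⁻¹
    let t : Fin 4 → ℝ := N *ᵥ ![1, 1, 1, 1]
    let v : Fin 4 → ℝ := (2 • N - 1) *ᵥ t - t * t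
    v 0 = ((pl * pr + pl ^ 2 + pr ^ 2 - pl ^ 2 * pr ^ 2)
            / (pl * pr * ps * (pl + pr - pl * pr))) ^ 2
      - (pl ^ 2 * pr * (1 - pr) * (2 - pr) + pl ^ 3 * (1 - pr) ^ 2 * (3 + pr)
          + 3 * pr ^ 3 + pl * pr * (4 + 2 * pr - 5 * pr ^ 2))
        / (pl * pr * ps * (pl + pr - pl * pr) ^ 2) :=
  two_link_single_heralded_latency_variance_general pl pr ps hl hl' hr hs
end

section
/- Let p_{l1}, p_{l2}, p_{r1}, p_{r2}, p_s ∈ (0,1). Then the matrix P_dhs has a unique stationary distribution: there exists exactly one row vector π ∈ ℝ¹⁰ with nonnegative entries summing to 1 such that π·P_dhs = π. (This is the equilibrium distribution of two-link entanglement distribution with double-heralded entanglement generation, whose component π_S gives the long-run throughput per time step.) -/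
/-!
For a row-stochastic matrix `P`, the triangle inequality `|v P| ≤ |v| P` together with
conservation of total mass shows that `|v|` is invariant whenever `v` is. Normalising `|v|` for a
nonzero left null vector `v` of `P - 1` gives a stationary distribution. If `π, ρ` are two of
them, `|v| ± v` with `v = π - ρ` are nonnegative invariant vectors, and the support of such a
vector is closed under transitions; since state 00 is reachable from every state of `P_dhs`
(through 22 and a failed swap if necessary), `v` can be neither positive nor negative anywhere.
-/

open Matrix Finset Relation

namespace Matrix

variable {n : Type*} [Fintype n] {P : Matrix n n ℝ} {u v : n → ℝ}

lemma pos_of_reflTransGen_of_vecMul_eq_self (hP : ∀ i j, 0 ≤ P i j) (hu : ∀ i, 0 ≤ u i)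
    (hfix : u ᵥ* P = u) {i j : n} (hij : ReflTransGen (fun i j => 0 < P i j) i j)
    (hi : 0 < u i) : 0 < u j := by
  induction hij with
  | refl => exact hi
  | @tail k l _ hkl ih =>
    calc 0 < u k * P k l := mul_pos ih hkl
      _ ≤ ∑ m, u m * P m l :=
        single_le_sum (f := fun m => u m * P m l) (fun m _ => mul_nonneg (hu m) (hP m l))
          (mem_univ k)
      _ = u l := congrFun hfix l

variable [DecidableEq n]

lemma sum_vecMul_of_mem_rowStochastic (hP : P ∈ rowStochastic ℝ n) (x : n → ℝ) :
    ∑ j, (x ᵥ* P) j = ∑ j, x j := by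
  simpa [dotProduct_one] using
    (dotProduct_mulVec x P 1).symm.trans (congrArg (x ⬝ᵥ ·) (one_vecMul_of_mem_rowStochastic hP))

lemma vecMul_abs_eq_abs_of_vecMul_eq_self (hP : P ∈ rowStochastic ℝ n) (hv : v ᵥ* P = v) :
    |v| ᵥ* P = |v| := by
  have hle : ∀ j ∈ univ, |v| j ≤ (|v| ᵥ* P) j := fun j _ =>
    calc |v| j = |∑ i, v i * P i j| := by rw [Pi.abs_apply, ← congrFun hv j]; rfl
      _ ≤ ∑ i, |v i * P i j| := abs_sum_le_sum_abs _ _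
      _ = (|v| ᵥ* P) j := by
        simp only [abs_mul, abs_of_nonneg (nonneg_of_mem_rowStochastic hP)]; rfl
  funext j
  exact ((sum_eq_sum_iff_of_le hle).1 (sum_vecMul_of_mem_rowStochastic hP _).symm j
    (mem_univ j)).symm

theorem exists_stationary_of_mem_rowStochastic [Nonempty n] (hP : P ∈ rowStochastic ℝ n) :
    ∃ π : n → ℝ, (∀ i, 0 ≤ π i) ∧ ∑ i, π i = 1 ∧ π ᵥ* P = π := by
  have hdet : (P - 1).det = 0 := exists_mulVec_eq_zero_iff.1
    ⟨1, one_ne_zero, by rw [sub_mulVec, one_mulVec, one_vecMul_of_mem_rowStochastic hP, sub_self]⟩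
  obtain ⟨w, hw0, hw⟩ := exists_vecMul_eq_zero_iff.2 hdet
  have hfix : |w| ᵥ* P = |w| := vecMul_abs_eq_abs_of_vecMul_eq_self hP
    (by rwa [vecMul_sub, vecMul_one, sub_eq_zero] at hw)
  have hpos : 0 < ∑ i, |w i| := by
    obtain ⟨i, hi⟩ := Function.ne_iff.1 hw0
    exact sum_pos' (fun j _ => abs_nonneg (w j)) ⟨i, mem_univ i, abs_pos.2 hi⟩
  refine ⟨(∑ i, |w i|)⁻¹ • |w|, fun i => ?_, ?_, by rw [smul_vecMul, hfix]⟩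
  · simp only [Pi.smul_apply, Pi.abs_apply, smul_eq_mul]; positivity
  · simp only [Pi.smul_apply, Pi.abs_apply, smul_eq_mul, ← mul_sum, inv_mul_cancel₀ hpos.ne']

lemma pos_of_reflTransGen_of_mem_rowStochastic (hP : P ∈ rowStochastic ℝ n) (hv : v ᵥ* P = v)
    {i j : n} (hij : ReflTransGen (fun i j => 0 < P i j) i j) (hi : 0 < v i) : 0 < v j := by
  -- `|v| + v` is a nonnegative invariant vector, positive exactly where `v` is.
  have hfix : (|v| + v) ᵥ* P = |v| + v := by
    rw [add_vecMul, vecMul_abs_eq_abs_of_vecMul_eq_self hP hv, hv]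
  have h := pos_of_reflTransGen_of_vecMul_eq_self (fun _ _ => nonneg_of_mem_rowStochastic hP)
    (fun k => by simp only [Pi.add_apply, Pi.abs_apply]; linarith [neg_abs_le (v k)]) hfix hij
    (by simp only [Pi.add_apply, Pi.abs_apply, abs_of_pos hi]; linarith)
  simp only [Pi.add_apply, Pi.abs_apply] at h
  by_contra! hj
  linarith [abs_of_nonpos hj]

lemma nonpos_of_vecMul_eq_self_of_sum_eq_zero (hP : P ∈ rowStochastic ℝ n) {j₀ : n}
    (hreach : ∀ i, ReflTransGen (fun i j => 0 < P i j) i j₀) (hv : v ᵥ* P = v)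
    (hsum : ∑ i, v i = 0) (i : n) : v i ≤ 0 := by
  by_contra! hi
  have hj₀ : 0 < v j₀ := pos_of_reflTransGen_of_mem_rowStochastic hP hv (hreach i) hi
  have hnonneg : ∀ k, 0 ≤ v k := fun k => by
    by_contra! hk
    have := pos_of_reflTransGen_of_mem_rowStochastic (v := -v) hP (by rw [neg_vecMul, hv])
      (hreach k) (neg_pos.2 hk)
    exact (neg_pos.1 this).not_gt hj₀
  exact hi.ne' ((sum_eq_zero_iff_of_nonneg fun k _ => hnonneg k).1 hsum i (mem_univ i))

theorem existsUnique_stationary_of_reflTransGen (hP : P ∈ rowStochastic ℝ n) (j₀ : n)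
    (hreach : ∀ i, ReflTransGen (fun i j => 0 < P i j) i j₀) :
    ∃! π : n → ℝ, (∀ i, 0 ≤ π i) ∧ ∑ i, π i = 1 ∧ π ᵥ* P = π := by
  have : Nonempty n := ⟨j₀⟩
  obtain ⟨π, hπ⟩ := exists_stationary_of_mem_rowStochastic hP
  have hle : ∀ {σ τ : n → ℝ}, σ ᵥ* P = σ → τ ᵥ* P = τ → ∑ i, σ i = 1 → ∑ i, τ i = 1 →
      ∀ i, (σ - τ) i ≤ 0 := fun hσ hτ hσ₁ hτ₁ =>
    nonpos_of_vecMul_eq_self_of_sum_eq_zero hP hreach (by rw [sub_vecMul, hσ, hτ])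
      (by simp only [Pi.sub_apply, sum_sub_distrib, hσ₁, hτ₁, sub_self])
  refine ⟨π, hπ, fun ρ hρ => funext fun i => ?_⟩
  have h₁ := hle hρ.2.2 hπ.2.2 hρ.2.1 hπ.2.1 i
  have h₂ := hle hπ.2.2 hρ.2.2 hπ.2.1 hρ.2.1 i
  simp only [Pi.sub_apply] at h₁ h₂
  linarith

end Matrix

-- States in the order 00, 01, 02, 10, 11, 12, 20, 21, 22, S.
def twoLinkDoubleHeraldedMatrix (pl1 pl2 pr1 pr2 ps : ℝ) : Matrix (Fin 10) (Fin 10) ℝ :=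
  !![(1-pl1)*(1-pr1), (1-pl1)*pr1, 0, pl1*(1-pr1), pl1*pr1, 0, 0, 0, 0, 0;
     (1-pl1)*(1-pr2), 0, (1-pl1)*pr2, pl1*(1-pr2), 0, pl1*pr2, 0, 0, 0, 0;
     0, 0, 1-pl1, 0, 0, pl1, 0, 0, 0, 0;
     (1-pl2)*(1-pr1), (1-pl2)*pr1, 0, 0, 0, 0, pl2*(1-pr1), pl2*pr1, 0, 0;
     (1-pl2)*(1-pr2), 0, (1-pl2)*pr2, 0, 0, 0, pl2*(1-pr2), 0, pl2*pr2, 0;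
     0, 0, 1-pl2, 0, 0, 0, 0, 0, pl2, 0;
     0, 0, 0, 0, 0, 0, 1-pr1, pr1, 0, 0;
     0, 0, 0, 0, 0, 0, 1-pr2, 0, pr2, 0;
     1-ps, 0, 0, 0, 0, 0, 0, 0, 0, ps;
     (1-pl1)*(1-pr1), (1-pl1)*pr1, 0, pl1*(1-pr1), pl1*pr1, 0, 0, 0, 0, 0]

lemma twoLinkDoubleHeraldedMatrix_mem_rowStochastic {pl1 pl2 pr1 pr2 ps : ℝ}
    (hl1 : pl1 ∈ Set.Icc 0 1) (hl2 : pl2 ∈ Set.Icc 0 1) (hr1 : pr1 ∈ Set.Icc 0 1)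
    (hr2 : pr2 ∈ Set.Icc 0 1) (hs : ps ∈ Set.Icc 0 1) :
    twoLinkDoubleHeraldedMatrix pl1 pl2 pr1 pr2 ps ∈ rowStochastic ℝ (Fin 10) := by
  obtain ⟨_, _⟩ := hl1; obtain ⟨_, _⟩ := hl2; obtain ⟨_, _⟩ := hr1; obtain ⟨_, _⟩ := hr2
  obtain ⟨_, _⟩ := hs
  refine mem_rowStochastic_iff_sum.2 ⟨fun i j => ?_, fun i => ?_⟩
  · fin_cases i <;> fin_cases j <;> simp [twoLinkDoubleHeraldedMatrix] <;>
    first | linarith | exact mul_nonneg (by linarith) (by linarith)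
  · fin_cases i <;> simp [twoLinkDoubleHeraldedMatrix, Fin.sum_univ_succ] <;> ring

lemma twoLinkDoubleHeraldedMatrix_reflTransGen {pl1 pl2 pr1 pr2 ps : ℝ}
    (hl1 : pl1 ∈ Set.Ioo 0 1) (hl2 : pl2 ∈ Set.Ioo 0 1) (hr1 : pr1 ∈ Set.Ioo 0 1)
    (hr2 : pr2 ∈ Set.Ioo 0 1) (hs : ps < 1) (i : Fin 10) :
    ReflTransGen (fun i j => 0 < twoLinkDoubleHeraldedMatrix pl1 pl2 pr1 pr2 ps i j) i 0 := by
  obtain ⟨_, _⟩ := hl1; obtain ⟨_, _⟩ := hl2; obtain ⟨_, _⟩ := hr1; obtain ⟨_, _⟩ := hr2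
  set P := twoLinkDoubleHeraldedMatrix pl1 pl2 pr1 pr2 ps
  have hq : ∀ {a b : ℝ}, a < 1 → b < 1 → 0 < (1 - a) * (1 - b) :=
    fun ha hb => mul_pos (sub_pos.2 ha) (sub_pos.2 hb)
  have h22 : ReflTransGen (fun i j => 0 < P i j) 8 0 :=
    .single (by simpa [P, twoLinkDoubleHeraldedMatrix] using hs)
  have h12 : ReflTransGen (fun i j => 0 < P i j) 5 0 :=
    .head (by simpa [P, twoLinkDoubleHeraldedMatrix]) h22
  have h21 : ReflTransGen (fun i j => 0 < P i j) 7 0 :=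
    .head (by simpa [P, twoLinkDoubleHeraldedMatrix]) h22
  fin_cases i
  · exact .refl
  · exact .single (by simpa [P, twoLinkDoubleHeraldedMatrix] using hq ‹pl1 < 1› ‹pr2 < 1›)
  · exact .head (by simpa [P, twoLinkDoubleHeraldedMatrix]) h12
  · exact .single (by simpa [P, twoLinkDoubleHeraldedMatrix] using hq ‹pl2 < 1› ‹pr1 < 1›)
  · exact .single (by simpa [P, twoLinkDoubleHeraldedMatrix] using hq ‹pl2 < 1› ‹pr2 < 1›)
  · exact h12
  · exact .head (by simpa [P, twoLinkDoubleHeraldedMatrix]) h21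
  · exact h21
  · exact h22
  · exact .single (by simpa [P, twoLinkDoubleHeraldedMatrix] using hq ‹pl1 < 1› ‹pr1 < 1›)

/-- The 10×10 transition matrix of two-link entanglement distribution with
double-heralded entanglement generation (round-`i` success probabilities `pl i`
on the left link and `pr i` on the right link, `i ∈ {1,2}`) and entanglement
swapping success probability `ps`, with states ordered
`(00, 01, 02, 10, 11, 12, 20, 21, 22, S)`, has a unique stationary distribution:
exactly one row vector `π` with nonnegative entries summing to `1` satisfies
`π·P_dhs = π`. -/
theorem two_link_double_heralded_unique_stationary (pl1 pl2 pr1 pr2 ps : ℝ)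
    (hl1 : 0 < pl1) (hl1' : pl1 < 1) (hl2 : 0 < pl2) (hl2' : pl2 < 1)
    (hr1 : 0 < pr1) (hr1' : pr1 < 1) (hr2 : 0 < pr2) (hr2' : pr2 < 1)
    (hs : 0 < ps) (hs' : ps < 1) :
    let P : Matrix (Fin 10) (Fin 10) ℝ :=
      !![(1-pl1)*(1-pr1), (1-pl1)*pr1, 0, pl1*(1-pr1), pl1*pr1, 0, 0, 0, 0, 0;
         (1-pl1)*(1-pr2), 0, (1-pl1)*pr2, pl1*(1-pr2), 0, pl1*pr2, 0, 0, 0, 0;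
         0, 0, 1-pl1, 0, 0, pl1, 0, 0, 0, 0;
         (1-pl2)*(1-pr1), (1-pl2)*pr1, 0, 0, 0, 0, pl2*(1-pr1), pl2*pr1, 0, 0;
         (1-pl2)*(1-pr2), 0, (1-pl2)*pr2, 0, 0, 0, pl2*(1-pr2), 0, pl2*pr2, 0;
         0, 0, 1-pl2, 0, 0, 0, 0, 0, pl2, 0;
         0, 0, 0, 0, 0, 0, 1-pr1, pr1, 0, 0;
         0, 0, 0, 0, 0, 0, 1-pr2, 0, pr2, 0;
         1-ps, 0, 0, 0, 0, 0, 0, 0, 0, ps;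
         (1-pl1)*(1-pr1), (1-pl1)*pr1, 0, pl1*(1-pr1), pl1*pr1, 0, 0, 0, 0, 0]
    ∃! π : Fin 10 → ℝ, (∀ s, 0 ≤ π s) ∧ (∑ s, π s = 1) ∧ π ᵥ* P = π := by
  intro P
  exact existsUnique_stationary_of_reflTransGen
    (twoLinkDoubleHeraldedMatrix_mem_rowStochastic ⟨hl1.le, hl1'.le⟩ ⟨hl2.le, hl2'.le⟩
      ⟨hr1.le, hr1'.le⟩ ⟨hr2.le, hr2'.le⟩ ⟨hs.le, hs'.le⟩) 0
    (twoLinkDoubleHeraldedMatrix_reflTransGen ⟨hl1, hl1'⟩ ⟨hl2, hl2'⟩ ⟨hr1, hr1'⟩ ⟨hr2, hr2'⟩ hs')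
end
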